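/- arXiv:1809.00742 — 2 statements merged into one kernel-verified Lean document; each statement's English description precedes it below -/
import Mathlib

section
/- Let p≥2 and P={312, 2431, δ} where δ is the length-(p+1) decreasing permutation (p+1)p...21. If α∈S_n(P), n≥1, has exactly k active sites, then α=λ^{↓k} or α=λ^{↓(k−1)} for some λ∈S_{n−1}(P). -/
open Equiv

/-- The pattern `σ` (a length-`k` permutation) is contained in the length-`n`
permutation `π` : some subsequence of `π` is order isomorphic to `σ`. -/
def Contains {k n : ℕ} (σ : Equiv.Perm (Fin k)) (π : Equiv.Perm (Fin n)) : Prop :=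
  ∃ f : Fin k → Fin n, StrictMono f ∧ ∀ a b : Fin k, σ a < σ b ↔ π (f a) < π (f b)

/-- A set of forbidden patterns, of possibly different lengths. -/
abbrev PatternSet : Type := Set ((k : ℕ) × Equiv.Perm (Fin k))

/-- `π` avoids every pattern of `P`, i.e. `π ∈ S_n(P)`. -/
def AvoidsSet {n : ℕ} (π : Equiv.Perm (Fin n)) (P : PatternSet) : Prop :=
  ∀ τ ∈ P, ¬ Contains τ.2 π

/-- The (0-indexed) position of the largest entry of `α`. -/
def maxPos {n : ℕ} (α : Equiv.Perm (Fin (n + 1))) : Fin (n + 1) := α⁻¹ (Fin.last n)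

/-- `α^→` : transpose the largest entry with the entry immediately to its right
(meaningful when `maxPos α ≠ Fin.last n`, i.e. the largest entry is not last). -/
def moveRight {n : ℕ} (α : Equiv.Perm (Fin (n + 1))) : Equiv.Perm (Fin (n + 1)) :=
  α * Equiv.swap (maxPos α) (maxPos α + 1)

/-- `α^←` : transpose the largest entry with the entry immediately to its left
(meaningful when `maxPos α ≠ 0`, i.e. the largest entry is not first). -/
def moveLeft {n : ℕ} (α : Equiv.Perm (Fin (n + 1))) : Equiv.Perm (Fin (n + 1)) :=
  α * Equiv.swap (maxPos α) (maxPos α - 1)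

/-- `P` is right-justified : moving the largest entry of a `P`-avoiding permutation one
position to the right again yields a `P`-avoiding permutation. -/
def RightJustified (P : PatternSet) : Prop :=
  ∀ (n : ℕ) (α : Equiv.Perm (Fin (n + 1))),
    AvoidsSet α P → maxPos α ≠ Fin.last n → AvoidsSet (moveRight α) P

/-- `α^{↓i}` : insert the new largest entry into site `i` of `α`; the `n+1` sites of a
length-`n` permutation are numbered `1, …, n+1` from right to left, so the new largest
entry lands at 0-indexed position `n - (i - 1)`. -/
def insertMax {n : ℕ} (α : Equiv.Perm (Fin n)) (i : ℕ) : Equiv.Perm (Fin (n + 1)) :=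
  (finSuccEquivLast.permCongr.symm α.optionCongr) *
    (Fin.revPerm * Fin.cycleRange (Fin.rev (⟨n - (i - 1), by omega⟩ : Fin (n + 1))) *
      Fin.revPerm)

/-- Site `i` of `α ∈ S_n(P)` is active (with respect to `P`). -/
def ActiveSite {n : ℕ} (P : PatternSet) (α : Equiv.Perm (Fin n)) (i : ℕ) : Prop :=
  1 ≤ i ∧ i ≤ n + 1 ∧ AvoidsSet (insertMax α i) P

/-- The number of active sites of `α` with respect to `P`. -/
noncomputable def numActive {n : ℕ} (P : PatternSet) (α : Equiv.Perm (Fin n)) : ℕ :=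
  Set.ncard {i : ℕ | ActiveSite P α i}

/-- Delete the largest entry of a length-`(n+1)` permutation. -/
def deleteMax {n : ℕ} (π : Equiv.Perm (Fin (n + 1))) : Equiv.Perm (Fin n) :=
  Equiv.removeNone (finSuccEquivLast.permCongr
    (π * (Fin.revPerm * Fin.cycleRange (Fin.rev (maxPos π)) * Fin.revPerm)⁻¹))

/-- The pattern `321`. -/
def perm321 : Equiv.Perm (Fin 3) := ⟨![2, 1, 0], ![2, 1, 0], by decide, by decide⟩
/-- The pattern `312`. -/
def perm312 : Equiv.Perm (Fin 3) := ⟨![2, 0, 1], ![1, 2, 0], by decide, by decide⟩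
/-- The pattern `231`. -/
def perm231 : Equiv.Perm (Fin 3) := ⟨![1, 2, 0], ![2, 0, 1], by decide, by decide⟩
/-- The pattern `2431`. -/
def perm2431 : Equiv.Perm (Fin 4) := ⟨![1, 3, 2, 0], ![3, 0, 2, 1], by decide, by decide⟩
/-- The pattern `4321`. -/
def perm4321 : Equiv.Perm (Fin 4) := ⟨![3, 2, 1, 0], ![3, 2, 1, 0], by decide, by decide⟩

/-- The pattern `(m+1) 1 2 … m` of length `m + 1`. -/
def sigmaM (m : ℕ) : Equiv.Perm (Fin (m + 1)) := (finRotate (m + 1))⁻¹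

/-- The pattern `p (p+1) 1 2 … (p-1)` of length `p + 1`. -/
def sigmaP (p : ℕ) : Equiv.Perm (Fin (p + 1)) := ((finRotate (p + 1))⁻¹) ^ 2

/-- The largest entry of `α` plays the role of `3` in an occurrence of the pattern
`231` : there are positions `a < b < c` with `α b` largest, `α a < α b` and `α c < α a`. -/
def MaxIn231 {n : ℕ} (α : Equiv.Perm (Fin n)) : Prop :=
  ∃ a b c : Fin n, a < b ∧ b < c ∧ (∀ x, α x ≤ α b) ∧ α a < α b ∧ α c < α a

/-- The last `p` entries of `α` are in decreasing order. -/
def LastDecreasing {n : ℕ} (α : Equiv.Perm (Fin n)) (p : ℕ) : Prop :=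
  ∀ a b : Fin n, n - p ≤ (a : ℕ) → a < b → α b < α a

open Classical in
/-- The color `d(α)` : it is `1` iff the largest entry of `α` plays the role of `3` in an
occurrence of `231` and the length-`p` suffix of `α` is not decreasing; otherwise `0`. -/
noncomputable def colorD {n : ℕ} (p : ℕ) (α : Equiv.Perm (Fin n)) : ℕ :=
  if MaxIn231 α ∧ ¬ LastDecreasing α p then 1 else 0

open Classical in
/-- The color used for `P = {312, 2431}` : it is `1` iff the largest entry of `α` plays
the role of `3` in an occurrence of `231`; otherwise `0`. -/
noncomputable def colorD2 {n : ℕ} (α : Equiv.Perm (Fin n)) : ℕ :=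
  if MaxIn231 α then 1 else 0


/-! Let `λ` be `α` with its maximum deleted, so that `α = λ^{↓j}`; as a site of `α`, `j` lies
immediately to the right of the maximum `n + 1`. It remains to see that `α` has `j` or `j + 1`
active sites.

* Site `j` is active. Put `n + 2` there: deleting either `n + 2` or `n + 1` (now adjacent)
  gives back `α`, so a forbidden occurrence would use both, with its second largest entry before
  its largest one; no pattern of `P` looks like that.
* Sites beyond `j + 1` are inactive: `n + 2`, the entry following it and `n + 1` form a `312`.
* `P` is right-justified: moving the maximum one step to the right creates no pattern, since an
  occurrence using both swapped entries would, for `312` and `δ`, have its maximum not first, and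
  for `2431` would place its `2 4` there, so that the original has a `312`. Hence the active sites
  form an initial segment `1, …, k`, and `j ≤ k ≤ j + 1`. -/

namespace Fin

variable {n : ℕ}

theorem succAbove_castSucc_eq_succAbove_succ {r y : Fin n} (h : y ≠ r) :
    r.castSucc.succAbove y = r.succ.succAbove y := by
  rcases h.lt_or_gt with h | h
  · rw [succAbove_of_castSucc_lt _ _ (castSucc_lt_castSucc_iff.mpr h),
      succAbove_of_castSucc_lt _ _ (castSucc_lt_succ_iff.mpr h.le)]
  · rw [succAbove_of_le_castSucc _ _ (castSucc_le_castSucc_iff.mpr h.le),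
      succAbove_of_le_castSucc _ _ (succ_le_castSucc_iff.mpr h)]

theorem swap_castSucc_succ_lt {u v : Fin (n + 1)} {r : Fin n} (huv : u < v)
    (h : u = r.castSucc → v ≠ r.succ) : swap r.castSucc r.succ u < swap r.castSucc r.succ v := by
  have hs : (r.succ : ℕ) = r + 1 := val_succ r
  have hc : (r.castSucc : ℕ) = r := val_castSucc r
  simp only [swap_apply_def, Fin.ext_iff, lt_def] at huv h ⊢
  split_ifs <;> omega

end Fin

section Insertion

variable {n : ℕ}

def sitePos (n i : ℕ) : Fin (n + 1) := ⟨n - (i - 1), by omega⟩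

def moveToLast (q : Fin (n + 1)) : Perm (Fin (n + 1)) :=
  Fin.revPerm * Fin.cycleRange q.rev * Fin.revPerm

theorem moveToLast_apply_self (q : Fin (n + 1)) : moveToLast q q = Fin.last n := by
  simp [moveToLast, Fin.cycleRange_self]

theorem moveToLast_apply_succAbove (q : Fin (n + 1)) (y : Fin n) :
    moveToLast q (q.succAbove y) = y.castSucc := by
  simp [moveToLast, Fin.rev_succAbove, Fin.cycleRange_succAbove, Fin.rev_succ]

theorem moveToLast_castSucc_mul_swap (r : Fin n) :
    moveToLast r.castSucc * swap r.castSucc r.succ = moveToLast r.succ := by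
  refine Equiv.ext fun x => ?_
  by_cases hx : x = r.succ
  · simp [hx, moveToLast_apply_self]
  obtain ⟨y, rfl⟩ := Fin.exists_succAbove_eq hx
  rw [Perm.mul_apply, moveToLast_apply_succAbove]
  by_cases hy : y = r
  · rw [hy, Fin.succAbove_succ_self, swap_apply_left, ← Fin.succAbove_castSucc_self,
      moveToLast_apply_succAbove]
  · have hne : r.succ.succAbove y ≠ r.castSucc := by
      rw [← Fin.succAbove_succ_self]; exact Fin.succAbove_right_injective.ne hy
    rw [swap_apply_of_ne_of_ne hne hx, ← Fin.succAbove_castSucc_eq_succAbove_succ hy,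
      moveToLast_apply_succAbove]

theorem insertMax_eq_mul_moveToLast (l : Perm (Fin n)) (i : ℕ) :
    insertMax l i = finSuccEquivLast.permCongr.symm l.optionCongr * moveToLast (sitePos n i) :=
  rfl

theorem insertMax_apply_sitePos (l : Perm (Fin n)) (i : ℕ) :
    insertMax l i (sitePos n i) = Fin.last n := by
  simp [insertMax_eq_mul_moveToLast, moveToLast_apply_self, permCongr_apply]

theorem insertMax_apply_succAbove (l : Perm (Fin n)) (i : ℕ) (y : Fin n) :
    insertMax l i ((sitePos n i).succAbove y) = (l y).castSucc := by
  simp [insertMax_eq_mul_moveToLast, moveToLast_apply_succAbove, permCongr_apply]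

theorem maxPos_insertMax (l : Perm (Fin n)) (i : ℕ) : maxPos (insertMax l i) = sitePos n i := by
  rw [maxPos, Perm.inv_eq_iff_eq, insertMax_apply_sitePos]

theorem apply_maxPos (α : Perm (Fin (n + 1))) : α (maxPos α) = Fin.last n :=
  α.apply_symm_apply _

theorem sitePos_succ_maxPos (α : Perm (Fin (n + 1))) :
    sitePos (n + 1) (n + 1 - maxPos α) = (maxPos α).succ :=
  Fin.ext (by simp only [sitePos, Fin.val_succ]; omega)

theorem insertMax_deleteMax (π : Perm (Fin (n + 1))) :
    insertMax (deleteMax π) (n + 1 - maxPos π) = π := by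
  have hsite : sitePos n (n + 1 - maxPos π) = maxPos π :=
    Fin.ext (by simp only [sitePos]; omega)
  have hlast : π ((moveToLast (maxPos π))⁻¹ (Fin.last n)) = Fin.last n := by
    rw [Perm.inv_eq_iff_eq.mpr (moveToLast_apply_self _).symm, apply_maxPos]
  set σ := finSuccEquivLast.permCongr (π * (moveToLast (maxPos π))⁻¹)
  have hσ : σ none = none := by
    simp only [σ, permCongr_apply, finSuccEquivLast_symm_none, Perm.mul_apply, hlast,
      finSuccEquivLast_last]
  have hdel : (deleteMax π).optionCongr = σ := by
    change (removeNone σ).optionCongr = σ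
    rw [map_equiv_removeNone, hσ, swap_self, ← Perm.one_def, one_mul]
  rw [insertMax_eq_mul_moveToLast, hdel, symm_apply_apply, hsite, inv_mul_cancel_right]

theorem moveRight_insertMax_succ (l : Perm (Fin n)) {i : ℕ} (hi : 1 ≤ i) (hin : i ≤ n) :
    moveRight (insertMax l (i + 1)) = insertMax l i := by
  let r : Fin n := ⟨n - i, by omega⟩
  have hcast : sitePos n (i + 1) = r.castSucc := Fin.ext (by simp [sitePos, r])
  have hsucc : sitePos n i = r.succ := Fin.ext (by simp only [sitePos, Fin.succ_mk, r]; omega)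
  rw [moveRight, maxPos_insertMax, hcast, Fin.coeSucc_eq_succ, insertMax_eq_mul_moveToLast,
    insertMax_eq_mul_moveToLast, hcast, hsucc, mul_assoc, moveToLast_castSucc_mul_swap]

end Insertion

section Deletion

variable {k n : ℕ}

def IsDeletion (σ : Perm (Fin n)) (π : Perm (Fin (n + 1))) (q : Fin (n + 1)) : Prop :=
  ∀ y z, σ y < σ z ↔ π (q.succAbove y) < π (q.succAbove z)

variable {τ : Perm (Fin k)} {σ : Perm (Fin n)} {π : Perm (Fin (n + 1))} {q : Fin (n + 1)}

theorem isDeletion_of_apply_succAbove {e : Fin n → Fin (n + 1)} (he : StrictMono e)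
    (h : ∀ y, π (q.succAbove y) = e (σ y)) : IsDeletion σ π q := fun y z => by
  rw [h, h, he.lt_iff_lt]

theorem IsDeletion.contains (h : IsDeletion σ π q) : Contains τ σ → Contains τ π
  | ⟨f, hf, hiso⟩ =>
    ⟨q.succAbove ∘ f, (Fin.strictMono_succAbove q).comp hf, fun a b => (hiso a b).trans (h _ _)⟩

theorem IsDeletion.contains_of_forall_ne (h : IsDeletion σ π q) {f : Fin k → Fin (n + 1)}
    (hf : StrictMono f) (hiso : ∀ a b, τ a < τ b ↔ π (f a) < π (f b)) (hq : ∀ c, f c ≠ q) :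
    Contains τ σ := by
  choose g hg using fun c => Fin.exists_succAbove_eq (hq c)
  refine ⟨g, fun a b hab => ?_, fun a b => ?_⟩
  · exact (Fin.strictMono_succAbove q).lt_iff_lt.mp (by rw [hg, hg]; exact hf hab)
  · rw [hiso, h, hg, hg]

theorem isDeletion_insertMax (l : Perm (Fin n)) (i : ℕ) :
    IsDeletion l (insertMax l i) (sitePos n i) :=
  isDeletion_of_apply_succAbove Fin.strictMono_castSucc (insertMax_apply_succAbove l i)

theorem isDeletion_insertMax_castSucc_maxPos (α : Perm (Fin (n + 1))) :
    IsDeletion α (insertMax α (n + 1 - maxPos α)) (maxPos α).castSucc := by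
  refine isDeletion_of_apply_succAbove (Fin.strictMono_succAbove (Fin.last n).castSucc)
    fun y => ?_
  by_cases hy : y = maxPos α
  · rw [hy, Fin.succAbove_castSucc_self, ← sitePos_succ_maxPos, insertMax_apply_sitePos,
      apply_maxPos, Fin.succAbove_castSucc_self, Fin.succ_last]
  · have hlt : α y < Fin.last n :=
      Fin.lt_last_iff_ne_last.mpr fun h => hy (α.injective (h.trans (apply_maxPos α).symm))
    rw [Fin.succAbove_castSucc_eq_succAbove_succ hy, ← sitePos_succ_maxPos,
      insertMax_apply_succAbove,
      Fin.succAbove_of_castSucc_lt _ _ (Fin.castSucc_lt_castSucc_iff.mpr hlt)]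

theorem AvoidsSet.of_insertMax {P : PatternSet} {l : Perm (Fin n)} {i : ℕ}
    (h : AvoidsSet (insertMax l i) P) : AvoidsSet l P :=
  fun τ hτ hl => h τ hτ ((isDeletion_insertMax l i).contains hl)

end Deletion

section Occurrence

variable {k n : ℕ} {τ : Perm (Fin k)}

theorem lt_of_apply_eq_last {π : Perm (Fin (n + 1))} {f : Fin k → Fin (n + 1)}
    (hf : Function.Injective f) (hiso : ∀ a b, τ a < τ b ↔ π (f a) < π (f b)) {b : Fin k}
    (hb : π (f b) = Fin.last n) {c : Fin k} (hc : c ≠ b) : τ c < τ b :=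
  (hiso c b).2 (hb ▸ Fin.lt_last_iff_ne_last.mpr fun h => hc (hf (π.injective (h.trans hb.symm))))

theorem lt_of_apply_eq_castSucc_last {π : Perm (Fin (n + 2))} {f : Fin k → Fin (n + 2)}
    (hf : Function.Injective f) (hiso : ∀ a b, τ a < τ b ↔ π (f a) < π (f b)) {a b : Fin k}
    (ha : π (f a) = (Fin.last n).castSucc) (hb : π (f b) = Fin.last (n + 1)) {c : Fin k}
    (hca : c ≠ a) (hcb : c ≠ b) : τ c < τ a := by
  refine (hiso c a).2 ?_
  have h1 : π (f c) ≠ π (f a) := π.injective.ne (hf.ne hca)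
  have h2 : π (f c) ≠ π (f b) := π.injective.ne (hf.ne hcb)
  have h3 := (π (f c)).isLt
  rw [ha] at h1 ⊢
  rw [hb] at h2
  simp only [ne_eq, Fin.ext_iff, Fin.lt_def, Fin.val_castSucc, Fin.val_last] at h1 h2 ⊢
  omega

theorem contains312_of {π : Perm (Fin n)} {a b c : Fin n} (hab : a < b) (hbc : b < c)
    (h1 : π b < π c) (h2 : π c < π a) : Contains perm312 π := by
  refine ⟨![a, b, c], Fin.strictMono_iff_lt_succ.mpr ?_, fun x y => ?_⟩
  · intro i; fin_cases i <;> simpa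
  · fin_cases x <;> fin_cases y <;>
      simp [perm312, h1, h2, h1.trans h2, h1.not_gt, h2.not_gt, (h1.trans h2).not_gt]

end Occurrence

def patterns312_2431Dec (p : ℕ) : PatternSet :=
  {⟨3, perm312⟩, ⟨4, perm2431⟩, ⟨p + 1, (Fin.revPerm : Perm (Fin (p + 1)))⟩}

theorem perm312_eq_zero_of_forall_lt {b : Fin 3} (h : ∀ c ≠ b, perm312 c < perm312 b) :
    b = 0 := by
  revert b; decide

theorem perm2431_eq_one_of_forall_lt {b : Fin 4} (h : ∀ c ≠ b, perm2431 c < perm2431 b) :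
    b = 1 := by
  revert b; decide

theorem revPerm_eq_zero_of_forall_lt {p : ℕ} {b : Fin (p + 1)}
    (h : ∀ c ≠ b, (Fin.revPerm : Perm (Fin (p + 1))) c < Fin.revPerm b) : b = 0 := by
  by_contra hb
  exact (Fin.le_last _).not_gt (by simpa using h 0 (Ne.symm hb))

theorem false_of_secondMax_before_max {p : ℕ} {τ : (k : ℕ) × Perm (Fin k)}
    (hτ : τ ∈ patterns312_2431Dec p) {a b : Fin τ.1} (hab : a < b)
    (hb : ∀ c ≠ b, τ.2 c < τ.2 b) (ha : ∀ c, c ≠ a → c ≠ b → τ.2 c < τ.2 a) : False := by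
  rcases hτ with rfl | rfl | rfl
  · exact absurd hab (by simp [perm312_eq_zero_of_forall_lt hb])
  · revert a b; decide
  · exact absurd hab (by simp [revPerm_eq_zero_of_forall_lt hb])

theorem rightJustified_patterns312_2431Dec (p : ℕ) : RightJustified (patterns312_2431Dec p) := by
  intro n π hπ hlast τ hτ ⟨f, hf, hiso⟩
  obtain ⟨r, hr⟩ := Fin.exists_castSucc_eq.mpr hlast
  have hπr : π r.castSucc = Fin.last n := hr ▸ apply_maxPos π
  rw [moveRight, ← hr, Fin.coeSucc_eq_succ] at hiso
  by_cases hboth : ∃ a b, f a = r.castSucc ∧ f b = r.succ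
  · obtain ⟨a, b, ha, hb⟩ := hboth
    have hab : a < b := hf.lt_iff_lt.mp (by rw [ha, hb]; exact Fin.castSucc_lt_succ)
    have hmax : ∀ c ≠ b, τ.2 c < τ.2 b := fun c =>
      lt_of_apply_eq_last hf.injective hiso (by simp [hb, hπr])
    rcases hτ with rfl | rfl | rfl
    · exact absurd hab (by simp [perm312_eq_zero_of_forall_lt hmax])
    · obtain rfl := perm2431_eq_one_of_forall_lt hmax
      obtain rfl : a = 0 := by simpa using hab
      have h12 : r.succ < f 2 := hb ▸ hf (by decide)
      have h02 := (hiso 0 2).mp (by decide)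
      rw [Perm.mul_apply, Perm.mul_apply, ha, swap_apply_left,
        swap_apply_of_ne_of_ne (Fin.castSucc_lt_succ.trans h12).ne' h12.ne'] at h02
      refine hπ _ (Or.inl rfl) (contains312_of Fin.castSucc_lt_succ h12 h02 ?_)
      rw [hπr, Fin.lt_last_iff_ne_last, ← hπr]
      exact π.injective.ne (Fin.castSucc_lt_succ.trans h12).ne'
    · exact absurd hab (by simp [revPerm_eq_zero_of_forall_lt hmax])
  · simp only [not_exists, not_and] at hboth
    refine hπ τ hτ ⟨swap r.castSucc r.succ ∘ f,
      fun a b hab => Fin.swap_castSucc_succ_lt (hf hab) (hboth a b), fun a b => ?_⟩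
    simpa [Perm.mul_apply] using hiso a b

section ActiveSites

variable {n : ℕ}

theorem avoidsSet_insertMax_right_of_maxPos {p : ℕ} {α : Perm (Fin (n + 1))}
    (hα : AvoidsSet α (patterns312_2431Dec p)) :
    AvoidsSet (insertMax α (n + 1 - maxPos α)) (patterns312_2431Dec p) := by
  have hN := isDeletion_insertMax α (n + 1 - maxPos α)
  rw [sitePos_succ_maxPos] at hN
  intro τ hτ ⟨f, hf, hiso⟩
  by_cases hb : ∃ b, f b = (maxPos α).succ
  swap
  · exact hα τ hτ (hN.contains_of_forall_ne hf hiso (by simpa using hb))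
  by_cases ha : ∃ a, f a = (maxPos α).castSucc
  swap
  · exact hα τ hτ
      ((isDeletion_insertMax_castSucc_maxPos α).contains_of_forall_ne hf hiso (by simpa using ha))
  obtain ⟨b, hb⟩ := hb
  obtain ⟨a, ha⟩ := ha
  have hab : a < b := hf.lt_iff_lt.mp (by rw [ha, hb]; exact Fin.castSucc_lt_succ)
  have hNb : insertMax α (n + 1 - maxPos α) (f b) = Fin.last (n + 1) := by
    rw [hb, ← sitePos_succ_maxPos, insertMax_apply_sitePos]
  have hmax : ∀ c ≠ b, τ.2 c < τ.2 b := fun c => lt_of_apply_eq_last hf.injective hiso hNb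
  exact false_of_secondMax_before_max hτ hab hmax fun c => lt_of_apply_eq_castSucc_last
    hf.injective hiso (by rw [ha, ← Fin.succAbove_succ_self, ← sitePos_succ_maxPos,
      insertMax_apply_succAbove, apply_maxPos]) hNb

theorem contains312_insertMax_of_lt (α : Perm (Fin (n + 1))) {i : ℕ}
    (hi : n + 2 - maxPos α < i) (hin : i ≤ n + 2) : Contains perm312 (insertMax α i) := by
  let y : Fin (n + 1) := ⟨n + 2 - i, by omega⟩
  have hq : sitePos (n + 1) i = y.castSucc :=
    Fin.ext (by simp only [sitePos, Fin.castSucc_mk, y]; omega)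
  have hym : y < maxPos α := by rw [Fin.lt_def]; simp only [y]; omega
  have hy : α y < Fin.last n :=
    Fin.lt_last_iff_ne_last.mpr fun h => hym.ne (α.injective (h.trans (apply_maxPos α).symm))
  refine contains312_of (a := y.castSucc) (b := y.succ) (c := (maxPos α).succ)
    Fin.castSucc_lt_succ (Fin.succ_lt_succ_iff.mpr hym) ?_ ?_
  · rw [← Fin.succAbove_castSucc_self, ← hq, insertMax_apply_succAbove,
      ← Fin.succAbove_of_le_castSucc _ _ (Fin.castSucc_le_castSucc_iff.mpr hym.le), ← hq,
      insertMax_apply_succAbove, apply_maxPos]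
    exact Fin.castSucc_lt_castSucc_iff.mpr hy
  · rw [← hq, insertMax_apply_sitePos,
      ← Fin.succAbove_of_le_castSucc _ _ (Fin.castSucc_le_castSucc_iff.mpr hym.le), ← hq,
      insertMax_apply_succAbove, apply_maxPos]
    exact Fin.castSucc_lt_last _

variable {P : PatternSet}

theorem ActiveSite.of_succ (hP : RightJustified P) {α : Perm (Fin n)} {i : ℕ}
    (h : ActiveSite P α (i + 1)) (hi : 1 ≤ i) : ActiveSite P α i := by
  obtain ⟨-, hin, hav⟩ := h
  refine ⟨hi, by omega, ?_⟩
  rw [← moveRight_insertMax_succ α hi (by omega)]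
  refine hP n _ hav fun h => ?_
  rw [maxPos_insertMax, Fin.ext_iff] at h
  simp only [sitePos, add_tsub_cancel_right, Fin.val_last] at h
  omega

theorem ActiveSite.of_le (hP : RightJustified P) {α : Perm (Fin n)} {i j : ℕ}
    (h : ActiveSite P α j) (hi : 1 ≤ i) (hij : i ≤ j) : ActiveSite P α i := by
  induction j, hij using Nat.le_induction with
  | base => exact h
  | succ j hij ih => exact ih (h.of_succ hP (hi.trans hij))

theorem numActive_eq_or_eq_succ (hP : RightJustified P)
    (h312 : (⟨3, perm312⟩ : (k : ℕ) × Perm (Fin k)) ∈ P) {α : Perm (Fin (n + 1))}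
    (hj : ActiveSite P α (n + 1 - maxPos α)) :
    numActive P α = n + 1 - maxPos α ∨ numActive P α = n + 2 - maxPos α := by
  have hlow : Set.Icc 1 (n + 1 - maxPos α) ⊆ {i | ActiveSite P α i} :=
    fun i hi => hj.of_le hP hi.1 hi.2
  have hup : {i | ActiveSite P α i} ⊆ Set.Icc 1 (n + 2 - maxPos α) := fun i ⟨hi, hin, hav⟩ =>
    ⟨hi, not_lt.mp fun hlt => hav _ h312 (contains312_insertMax_of_lt α hlt hin)⟩
  have h1 := Set.ncard_le_ncard hlow ((Set.finite_Icc _ _).subset hup)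
  have h2 := Set.ncard_le_ncard hup (Set.finite_Icc _ _)
  rw [Set.ncard_Icc_nat] at h1 h2
  unfold numActive
  omega

end ActiveSites

theorem exists_parent_insert_general (p : ℕ) (P : PatternSet)
    (hP : P = {⟨3, perm312⟩, ⟨4, perm2431⟩,
      ⟨p + 1, (Fin.revPerm : Equiv.Perm (Fin (p + 1)))⟩})
    {n : ℕ} (α : Equiv.Perm (Fin (n + 1))) (hα : AvoidsSet α P) (k : ℕ)
    (hk : numActive P α = k) :
    ∃ lam : Equiv.Perm (Fin n), AvoidsSet lam P ∧
      (α = insertMax lam k ∨ α = insertMax lam (k - 1)) := by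
  obtain rfl : P = patterns312_2431Dec p := hP
  have hj : ActiveSite (patterns312_2431Dec p) α (n + 1 - maxPos α) :=
    ⟨by omega, by omega, avoidsSet_insertMax_right_of_maxPos hα⟩
  refine ⟨deleteMax α, AvoidsSet.of_insertMax (i := n + 1 - maxPos α)
    (by rwa [insertMax_deleteMax]), ?_⟩
  rcases numActive_eq_or_eq_succ (rightJustified_patterns312_2431Dec p) (Or.inl rfl) hj
    with h | h
  · exact .inl (by rw [← hk, h, insertMax_deleteMax])
  · exact .inr (by rw [← hk, h, show n + 2 - maxPos α - 1 = n + 1 - maxPos α by omega,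
      insertMax_deleteMax])

/-- For `p ≥ 2` and `P = {312, 2431, (p+1)p…21}` : if `α ∈ S_n(P)`,
`n ≥ 1`, has exactly `k` active sites, then `α = λ^{↓k}` or `α = λ^{↓(k-1)}` for some
`λ ∈ S_{n-1}(P)`. -/
theorem exists_parent_insert (p : ℕ) (hp : 2 ≤ p) (P : PatternSet)
    (hP : P = {⟨3, perm312⟩, ⟨4, perm2431⟩,
      ⟨p + 1, (Fin.revPerm : Equiv.Perm (Fin (p + 1)))⟩})
    {n : ℕ} (α : Equiv.Perm (Fin (n + 1))) (hα : AvoidsSet α P) (k : ℕ)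
    (hk : numActive P α = k) :
    ∃ lam : Equiv.Perm (Fin n), AvoidsSet lam P ∧
      (α = insertMax lam k ∨ α = insertMax lam (k - 1)) :=
  exists_parent_insert_general p P hP α hα k hk
end

section
/- Let P be a set of forbidden patterns, let α∈S_n(P) be such that α^{↓1}∈S_{n+1}(P), and suppose that (α^{↓1})^{↓2} contains some pattern belonging to P. Then P contains a pattern τ of some length k≥2 of the form τ=τ(1)τ(2)...τ(k−2) k (k−1), i.e., a pattern whose largest entry k is in the next-to-last position and whose entry k−1 is in the last position. -/
open Equiv

/-!
Write `γ = α^{↓1}` and `β = γ^{↓2}`; then `β` is `α` followed by `n + 2, n + 1`. Deleting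
either of these last two entries from `β` leaves a permutation order isomorphic to `γ`, which
avoids `P`, so every occurrence in `β` of a pattern of `P` uses both of them. They occupy the
last two positions of `β`, hence of the occurrence, and are the largest and second largest
entries of `β`, hence of the pattern.
-/

open Fin

variable {k m n : ℕ}

def IsOccurrence (σ : Perm (Fin k)) (π : Perm (Fin n)) (f : Fin k → Fin n) : Prop :=
  StrictMono f ∧ ∀ a b, σ a < σ b ↔ π (f a) < π (f b)

/-- `hπ` says that deleting the entry at position `p` of `π`, of value `q`, leaves a
permutation order isomorphic to `ρ`. -/
theorem IsOccurrence.contains_of_forall_ne {σ : Perm (Fin k)} {π : Perm (Fin (n + 1))}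
    {ρ : Perm (Fin n)} {p q : Fin (n + 1)} (hπ : ∀ i, π (p.succAbove i) = q.succAbove (ρ i))
    {f : Fin k → Fin (n + 1)} (hf : IsOccurrence σ π f) (hp : ∀ a, f a ≠ p) :
    Contains σ ρ := by
  choose g hg using fun a => exists_succAbove_eq (hp a)
  refine ⟨g, fun a b hab => ?_, fun a b => ?_⟩
  · rw [← (strictMono_succAbove p).lt_iff_lt, hg, hg]
    exact hf.1 hab
  · rw [hf.2, ← hg, ← hg, hπ, hπ, (strictMono_succAbove q).lt_iff_lt]

theorem StrictMono.val_rev_le {f : Fin k → Fin n} (hf : StrictMono f) (a : Fin k) :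
    (a.rev : ℕ) ≤ (f a).rev := by
  have h := Finset.card_le_card_of_injOn f (s := Finset.Ioi a) (t := Finset.Ioi (f a))
    (fun b hb => by simpa using hf (by simpa using hb)) hf.injective.injOn
  simp only [card_Ioi] at h
  simp only [val_rev]
  omega

theorem StrictMono.eq_castSucc_last_of_eq_last {f : Fin (m + 2) → Fin (n + 2)} (hf : StrictMono f)
    {a b : Fin (m + 2)} (ha : f a = castSucc (last n)) (hb : f b = last (n + 1)) :
    a = castSucc (last m) ∧ b = last (m + 1) := by
  have hab : a ≠ b := ne_of_apply_ne f (by simp [ha, hb])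
  have hra := hf.val_rev_le a
  have hrb := hf.val_rev_le b
  simp only [val_rev, ha, hb, val_castSucc, val_last] at hra hrb
  rw [Ne, ← val_inj] at hab
  constructor <;> ext <;> simp <;> omega

theorem IsOccurrence.apply_eq_last {σ : Perm (Fin (m + 1))} {π : Perm (Fin (n + 1))}
    {f : Fin (m + 1) → Fin (n + 1)} (hf : IsOccurrence σ π f) {a : Fin (m + 1)}
    (ha : π (f a) = last n) : σ a = last m := by
  have hle (c : Fin (m + 1)) : σ c ≤ σ a := by
    rw [← not_lt, hf.2, ha, not_lt]
    exact le_last _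
  exact le_antisymm (le_last _) (by simpa using hle (σ.symm (last m)))

theorem IsOccurrence.apply_eq_castSucc_last {σ : Perm (Fin (m + 2))} {π : Perm (Fin (n + 2))}
    {f : Fin (m + 2) → Fin (n + 2)} (hf : IsOccurrence σ π f) {a b : Fin (m + 2)}
    (ha : π (f a) = last (n + 1)) (hb : π (f b) = castSucc (last n)) :
    σ b = castSucc (last m) := by
  have hσa := hf.apply_eq_last ha
  have hle (c : Fin (m + 2)) (hc : c ≠ a) : σ c ≤ σ b := by
    rw [← not_lt, hf.2, hb, not_lt, le_castSucc_iff, succ_last, lt_last_iff_ne_last, ← ha]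
    exact (π.injective.comp hf.1.injective).ne hc
  have hba : b ≠ a := ne_of_apply_ne (π ∘ f) (by simp [ha, hb])
  have hne : σ.symm (castSucc (last m)) ≠ a := by
    rw [Ne, Equiv.symm_apply_eq, hσa]
    exact (castSucc_lt_last _).ne
  refine le_antisymm ?_ (by simpa using hle _ hne)
  rw [le_castSucc_iff, succ_last, lt_last_iff_ne_last, ← hσa]
  exact σ.injective.ne hba

theorem insertMax_apply_site (α : Perm (Fin n)) (i : ℕ) :
    insertMax α i ⟨n - (i - 1), by omega⟩ = last n := by
  simp [insertMax]

theorem insertMax_apply_succAbove_site (α : Perm (Fin n)) (i : ℕ) (j : Fin n) :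
    insertMax α i (succAbove ⟨n - (i - 1), by omega⟩ j) = castSucc (α j) := by
  simp [insertMax, rev_succAbove, rev_succ]

theorem insertMax_one_apply_castSucc (α : Perm (Fin n)) (j : Fin n) :
    insertMax α 1 (castSucc j) = castSucc (α j) := by
  conv_lhs => rw [← succAbove_last]
  exact insertMax_apply_succAbove_site α 1 j

theorem insertMax_one_apply_last (α : Perm (Fin n)) : insertMax α 1 (last n) = last n :=
  insertMax_apply_site α 1

theorem insertMax_two_apply_succAbove_castSucc_last (γ : Perm (Fin (n + 1))) (i : Fin (n + 1)) :
    insertMax γ 2 ((castSucc (last n)).succAbove i) = (last (n + 1)).succAbove (γ i) := by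
  rw [succAbove_last]
  exact insertMax_apply_succAbove_site γ 2 i

theorem insertMax_two_apply_castSucc_last (γ : Perm (Fin (n + 1))) :
    insertMax γ 2 (castSucc (last n)) = last (n + 1) :=
  insertMax_apply_site γ 2

theorem insertMax_two_apply_last (γ : Perm (Fin (n + 1))) :
    insertMax γ 2 (last (n + 1)) = castSucc (γ (last n)) := by
  rw [← succ_last, ← succAbove_castSucc_self, insertMax_two_apply_succAbove_castSucc_last,
    succAbove_last]

theorem insertMax_one_two_apply_succAbove_last (α : Perm (Fin n)) (i : Fin (n + 1)) :
    insertMax (insertMax α 1) 2 ((last (n + 1)).succAbove i) =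
      (castSucc (last n)).succAbove (insertMax α 1 i) := by
  rw [succAbove_last]
  induction i using lastCases with
  | last =>
    rw [insertMax_two_apply_castSucc_last, insertMax_one_apply_last, succAbove_castSucc_self,
      succ_last]
  | cast j =>
    rw [insertMax_one_apply_castSucc, succAbove_castSucc_of_lt _ _ (castSucc_lt_last _),
      ← succAbove_castSucc_of_lt _ _ (castSucc_lt_last j),
      insertMax_two_apply_succAbove_castSucc_last, succAbove_last, insertMax_one_apply_castSucc]

/-- Let `P` be a set of forbidden patterns, `α ∈ S_n(P)` with
`α^{↓1} ∈ S_{n+1}(P)`, and suppose `(α^{↓1})^{↓2}` contains some pattern of `P`. Then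
`P` contains a pattern `τ` of some length `k ≥ 2` whose largest entry `k` is in the
next-to-last position and whose entry `k − 1` is in the last position. -/
theorem exists_special_pattern (P : PatternSet) {n : ℕ} (α : Equiv.Perm (Fin n))
    (h1 : AvoidsSet (insertMax α 1) P)
    (h2 : ¬ AvoidsSet (insertMax (insertMax α 1) 2) P) :
    ∃ (m : ℕ) (τ : Equiv.Perm (Fin (m + 2))),
      (⟨m + 2, τ⟩ : (k : ℕ) × Equiv.Perm (Fin k)) ∈ P ∧
      (τ ⟨m, by omega⟩ : ℕ) = m + 1 ∧ (τ ⟨m + 1, by omega⟩ : ℕ) = m := by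
  simp only [AvoidsSet, not_forall, not_not] at h2
  obtain ⟨⟨k, σ⟩, hσP, hσ⟩ := h2
  obtain ⟨f, hf⟩ : ∃ f, IsOccurrence σ (insertMax (insertMax α 1) 2) f := hσ
  have hits {p q : Fin (n + 2)} (hpq : ∀ i, insertMax (insertMax α 1) 2 (p.succAbove i) =
      q.succAbove (insertMax α 1 i)) : ∃ a, f a = p := by
    by_contra! hp
    exact h1 _ hσP (hf.contains_of_forall_ne hpq hp)
  obtain ⟨a, ha⟩ := hits (insertMax_two_apply_succAbove_castSucc_last _)
  obtain ⟨b, hb⟩ := hits (insertMax_one_two_apply_succAbove_last α)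
  obtain ⟨m, rfl⟩ : ∃ m, k = m + 2 := by
    have hab : a ≠ b := ne_of_apply_ne f (by simp [ha, hb])
    have := val_injective.ne hab
    exact ⟨k - 2, by omega⟩
  obtain ⟨rfl, rfl⟩ := hf.1.eq_castSucc_last_of_eq_last ha hb
  have hβa := ha ▸ insertMax_two_apply_castSucc_last (insertMax α 1)
  have hβb : insertMax (insertMax α 1) 2 (f (last (m + 1))) = castSucc (last n) := by
    rw [hb, insertMax_two_apply_last, insertMax_one_apply_last]
  exact ⟨m, σ, hσP, congrArg Fin.val (hf.apply_eq_last hβa),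
    congrArg Fin.val (hf.apply_eq_castSucc_last hβa hβb)⟩
end
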